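/- arXiv:2602.00177 — 2 statements merged into one kernel-verified Lean document; each statement's English description precedes it below -/
import Mathlib

section
/- Let Ω ⊆ ℂⁿ be a convex Reinhardt domain, let h and g be holomorphic on Ω, and suppose there is γ ∈ ℝ such that Re(e^{iγ}·∂h/∂z_j(z)) > |∂g/∂z_j(z)| for all z ∈ Ω and all j = 1,…,n. Then the pluriharmonic mapping f = h + conj∘g separates all pairs of points whose difference has nonnegative real coordinates: for all z, w ∈ Ω with z ≠ w such that w_j − z_j is a nonnegative real number for every j = 1,…,n, one has f(z) ≠ f(w). (This is the injectivity estimate established in the proof of Theorem 2.1.) -/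
open Complex Finset

noncomputable def pder {n : ℕ} (f : (Fin n → ℂ) → ℂ) (z : Fin n → ℂ) (j : Fin n) : ℂ :=
  fderiv ℂ f z (Pi.single j 1)

noncomputable def pder2 {n : ℕ} (f : (Fin n → ℂ) → ℂ) (z : Fin n → ℂ) (j k : Fin n) : ℂ :=
  fderiv ℂ (fun w => pder f w k) z (Pi.single j 1)

def polydisk (n : ℕ) : Set (Fin n → ℂ) := {z | ∀ j, ‖z j‖ < 1}

/-- The class `𝓑_n(M)` of normalized holomorphic functions on the unit polydisk. -/
def memB (n : ℕ) (M : ℝ) (f : (Fin n → ℂ) → ℂ) : Prop :=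
  (∀ z ∈ polydisk n, DifferentiableAt ℂ f z) ∧ f 0 = 0 ∧
    (∀ j : Fin n, pder f 0 j = 1) ∧
    ∀ z ∈ polydisk n, ∑ l, ∑ j, ∑ k, ‖z l * pder2 f z j k‖ ≤ M

/-- The class `𝓑_{H_n^0}(M)` of normalized pluriharmonic mappings `f = h + conj ∘ g`. -/
def memBH (n : ℕ) (M : ℝ) (h g : (Fin n → ℂ) → ℂ) : Prop :=
  (∀ z ∈ polydisk n, DifferentiableAt ℂ h z) ∧ (∀ z ∈ polydisk n, DifferentiableAt ℂ g z) ∧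
    h 0 = 0 ∧ g 0 = 0 ∧ (∀ j : Fin n, pder h 0 j = 1) ∧ (∀ j : Fin n, pder g 0 j = 0) ∧
    ∀ z ∈ polydisk n, ∑ l, ∑ j, ∑ k,
      (‖z l * pder2 h z j k‖ + ‖z l * pder2 g z j k‖) ≤ M

open ComplexConjugate

/-!
Write `f = h + conj ∘ g` and `e = exp (iγ)`. If `w - z` has nonnegative real coordinates, the
derivative of `s ↦ Re (e · f (z + s (w - z)))` on `[0, 1]` is
`∑ⱼ (wⱼ - zⱼ) Re (e (∂h/∂zⱼ + conj ∂g/∂zⱼ))`, because the coordinates of `w - z` are real and so pass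
through the conjugation. Each summand is nonnegative by the hypothesis, and one is positive when
`z ≠ w`, so by the mean value theorem the function takes different values at `0` and `1`.
-/

lemma fderiv_apply_eq_sum_pder {n : ℕ} (f : (Fin n → ℂ) → ℂ) (p u : Fin n → ℂ) :
    fderiv ℂ f p u = ∑ j, u j * pder f p j := by
  conv_lhs => rw [← univ_sum_single u, map_sum]
  refine sum_congr rfl fun j _ => ?_
  rw [pder, ← smul_eq_mul, ← map_smul, ← Pi.single_smul, smul_eq_mul, mul_one]

lemma re_mul_add_conj_pos {e a b : ℂ} (he : ‖e‖ ≤ 1) (hab : ‖b‖ < (e * a).re) :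
    0 < (e * (a + conj b)).re := by
  have hconj : -‖b‖ ≤ (e * conj b).re :=
    calc -‖b‖ ≤ -‖e * conj b‖ := by
          rw [norm_mul, norm_conj]; nlinarith [norm_nonneg b]
      _ ≤ (e * conj b).re := neg_le_of_abs_le (abs_re_le_norm _)
  rw [mul_add, add_re]
  linarith

lemma re_mul_fderiv_add_conj_fderiv_pos {n : ℕ} {h g : (Fin n → ℂ) → ℂ} {e : ℂ} (he : ‖e‖ ≤ 1)
    {p : Fin n → ℂ} (hp : ∀ j, ‖pder g p j‖ < (e * pder h p j).re)
    {r : Fin n → ℝ} (hr : 0 ≤ r) (hr0 : r ≠ 0) :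
    0 < (e * (fderiv ℂ h p (fun j => r j) + conj (fderiv ℂ g p (fun j => r j)))).re := by
  have hsplit : e * (fderiv ℂ h p (fun j => r j) + conj (fderiv ℂ g p (fun j => r j))) =
      ∑ j, (r j : ℂ) * (e * (pder h p j + conj (pder g p j))) := by
    simp only [fderiv_apply_eq_sum_pder, map_sum, map_mul, conj_ofReal, mul_sum,
      ← sum_add_distrib]
    exact sum_congr rfl fun j _ => by ring
  rw [hsplit, re_sum]
  obtain ⟨j, hj⟩ := Function.ne_iff.mp hr0
  refine sum_pos' (fun i _ => ?_) ⟨j, mem_univ j, ?_⟩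
  · rw [re_ofReal_mul]
    exact mul_nonneg (hr i) (re_mul_add_conj_pos he (hp i)).le
  · rw [re_ofReal_mul]
    exact mul_pos ((hr j).lt_of_ne' hj) (re_mul_add_conj_pos he (hp j))

lemma hasDerivAt_add_conj_comp_line {n : ℕ} {h g : (Fin n → ℂ) → ℂ} {z u : Fin n → ℂ} {t : ℝ}
    (hh : DifferentiableAt ℂ h (z + t • u)) (hg : DifferentiableAt ℂ g (z + t • u)) :
    HasDerivAt (fun s : ℝ => h (z + s • u) + conj (g (z + s • u)))
      (fderiv ℂ h (z + t • u) u + conj (fderiv ℂ g (z + t • u) u)) t := by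
  have hline : HasDerivAt (fun s : ℝ => z + s • u) u t := by
    simpa using ((hasDerivAt_id t).smul_const u).const_add z
  exact ((hh.hasFDerivAt.restrictScalars ℝ).comp_hasDerivAt t hline).add
    ((hg.hasFDerivAt.restrictScalars ℝ).comp_hasDerivAt t hline).star

theorem stmt_2_general {n : ℕ} (Ω : Set (Fin n → ℂ)) (hconv : Convex ℝ Ω)
    (h g : (Fin n → ℂ) → ℂ)
    (hh : ∀ z ∈ Ω, DifferentiableAt ℂ h z) (hg : ∀ z ∈ Ω, DifferentiableAt ℂ g z)
    (γ : ℝ)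
    (hineq : ∀ z ∈ Ω, ∀ j : Fin n,
      ‖pder g z j‖ < (Complex.exp ((γ : ℂ) * Complex.I) * pder h z j).re) :
    ∀ z ∈ Ω, ∀ w ∈ Ω, z ≠ w → (∀ j : Fin n, ∃ r : ℝ, 0 ≤ r ∧ w j - z j = (r : ℂ)) →
      h z + starRingEnd ℂ (g z) ≠ h w + starRingEnd ℂ (g w) := by
  intro z hz w hw hzw hray hfzw
  choose r hr hwz using hray
  have hu : w - z = fun j => (r j : ℂ) := funext hwz
  have hr0 : r ≠ 0 := fun h0 => hzw (sub_eq_zero.mp (by rw [hu, h0]; rfl)).symm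
  set e := exp (γ * I)
  set ψ : ℝ → ℝ := fun s => (e * (h (z + s • (w - z)) + conj (g (z + s • (w - z))))).re
  have hmem : ∀ t ∈ Set.Icc (0 : ℝ) 1, z + t • (w - z) ∈ Ω :=
    fun t ht => hconv.add_smul_sub_mem hz hw ht
  have hψ : ∀ t ∈ Set.Icc (0 : ℝ) 1, HasDerivAt ψ (e * (fderiv ℂ h (z + t • (w - z)) (w - z) +
      conj (fderiv ℂ g (z + t • (w - z)) (w - z)))).re t := fun t ht =>
    reCLM.hasFDerivAt.comp_hasDerivAt t
      ((hasDerivAt_add_conj_comp_line (hh _ (hmem t ht)) (hg _ (hmem t ht))).const_mul e)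
  obtain ⟨c, hc, hslope⟩ := exists_hasDerivAt_eq_slope ψ _ zero_lt_one
    (fun t ht => (hψ t ht).continuousAt.continuousWithinAt)
    (fun t ht => hψ t (Set.Ioo_subset_Icc_self ht))
  have hψ01 : ψ 1 = ψ 0 := by simp only [ψ, one_smul, add_sub_cancel, zero_smul, add_zero, hfzw]
  have hpos := re_mul_fderiv_add_conj_fderiv_pos (norm_exp_ofReal_mul_I γ).le
    (hineq _ (hmem c (Set.Ioo_subset_Icc_self hc))) hr hr0
  rw [← hu, hslope, hψ01, sub_self, zero_div] at hpos
  exact lt_irrefl 0 hpos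

/-- injectivity estimate from the proof of Theorem 2.1 (pluriharmonic
Noshiro–Warschawski criterion on convex Reinhardt domains). -/
theorem stmt_2 {n : ℕ} (Ω : Set (Fin n → ℂ)) (hΩ : IsOpen Ω) (hconv : Convex ℝ Ω)
    (hRein : ∀ z ∈ Ω, ∀ θ : Fin n → ℝ,
      (fun j => Complex.exp ((θ j : ℂ) * Complex.I) * z j) ∈ Ω)
    (h g : (Fin n → ℂ) → ℂ)
    (hh : ∀ z ∈ Ω, DifferentiableAt ℂ h z) (hg : ∀ z ∈ Ω, DifferentiableAt ℂ g z)
    (γ : ℝ)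
    (hineq : ∀ z ∈ Ω, ∀ j : Fin n,
      ‖pder g z j‖ < (Complex.exp ((γ : ℂ) * Complex.I) * pder h z j).re) :
    ∀ z ∈ Ω, ∀ w ∈ Ω, z ≠ w → (∀ j : Fin n, ∃ r : ℝ, 0 ≤ r ∧ w j - z j = (r : ℂ)) →
      h z + starRingEnd ℂ (g z) ≠ h w + starRingEnd ℂ (g w) :=
  stmt_2_general Ω hconv h g hh hg γ hineq
end

section
/- Let 0 < M ≤ 1 and let f ∈ 𝓑_n(M). Then ∂f/∂z_k(z) ≠ 0 for every z ∈ 𝔻ⁿ and every k = 1,…,n. (Non-vanishing of the partial derivatives established in Theorem 2.4.) -/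
/-!
Fix `z ≠ 0` in the polydisk and put `φ(s) = ∂f/∂z_k(s z)` for `|s| < 1/‖z‖`. Then
`s φ'(s) = ∑ⱼ (s z_j) ∂²f/∂z_j∂z_k(s z)` has modulus at most `M`, so Schwarz's lemma applied to
`s ↦ s φ'(s)` gives `|φ'| ≤ M ‖z‖`, and `|φ(1) - φ(0)| ≤ M ‖z‖ < 1` with `φ(0) = 1`.

The chain rule behind `φ'` needs `∂f/∂z_k` to be holomorphic in all variables at once. This
follows from the Cauchy formula on a small circle in the direction `e_k`, differentiated under
the integral sign; the bound on `f'` needed for that is again Schwarz's lemma.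
-/

open Complex Finset

open Metric Set Filter Topology

section Holomorphic

variable {E F : Type*} [NormedAddCommGroup E] [NormedSpace ℂ E]
  [NormedAddCommGroup F] [NormedSpace ℂ F]

theorem exists_eventually_norm_fderiv_le {f : E → F} {w₀ : E}
    (hf : ∀ᶠ w in 𝓝 w₀, DifferentiableAt ℂ f w) :
    ∃ B, ∀ᶠ w in 𝓝 w₀, ‖fderiv ℂ f w‖ ≤ B := by
  have hclose : ∀ᶠ w in 𝓝 w₀, f w ∈ ball (f w₀) 1 :=
    hf.self_of_nhds.continuousAt.eventually_mem (ball_mem_nhds _ one_pos)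
  obtain ⟨ε, hε, hball⟩ := Metric.eventually_nhds_iff_ball.1 (hf.and hclose)
  refine ⟨2 / (ε / 2), ?_⟩
  filter_upwards [ball_mem_nhds w₀ (half_pos hε)] with w hw
  have hsub : ball w (ε / 2) ⊆ ball w₀ ε :=
    ball_subset_ball' (by rw [mem_ball] at hw; linarith)
  refine norm_fderiv_le_div_of_mapsTo_ball (fun y hy ↦ (hball y (hsub hy)).1.differentiableWithinAt)
    (fun y hy ↦ ?_) (half_pos hε)
  have hy := (hball y (hsub hy)).2
  have hw := (hball w (hsub (mem_ball_self (half_pos hε)))).2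
  rw [mem_ball] at hy hw
  rw [mem_closedBall]
  linarith [dist_triangle_right (f y) (f w) (f w₀)]

theorem hasDerivAt_comp_add_smul {f : E → F} {w v : E} {u : ℂ}
    (hf : DifferentiableAt ℂ f (w + u • v)) :
    HasDerivAt (fun u : ℂ ↦ f (w + u • v)) (fderiv ℂ f (w + u • v) v) u := by
  have hline : HasDerivAt (fun u : ℂ ↦ w + u • v) v u := by
    simpa using ((hasDerivAt_id u).smul_const v).const_add w
  exact hf.hasFDerivAt.comp_hasDerivAt u hline

open Real in
theorem fderiv_apply_eq_circleIntegral [CompleteSpace F] {f : E → F} {w v : E} {ρ : ℝ}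
    (hρ : 0 < ρ) (hf : ∀ z ∈ closedBall (0 : ℂ) ρ, DifferentiableAt ℂ f (w + z • v)) :
    fderiv ℂ f w v = (2 * π * I)⁻¹ • ∮ z in C(0, ρ), (1 / z ^ 2) • f (w + z • v) := by
  have hline : DifferentiableOn ℂ (fun u : ℂ ↦ f (w + u • v)) (closedBall 0 ρ) :=
    fun u hu ↦ (hasDerivAt_comp_add_smul (hf u hu)).differentiableAt.differentiableWithinAt
  have hcauchy := hline.deriv_eq_smul_circleIntegral hρ
  have h0 := (hasDerivAt_comp_add_smul (u := 0) (hf 0 (mem_closedBall_self hρ.le))).deriv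
  simp only [zero_smul, add_zero, sub_zero] at hcauchy h0
  rw [hcauchy, h0, smul_smul, inv_mul_cancel₀ two_pi_I_ne_zero, one_smul]

theorem differentiableAt_intervalIntegral_smul_comp_add [FiniteDimensional ℂ E] [CompleteSpace F]
    [SecondCountableTopology F] {f : E → F} {c : ℝ → ℂ} {γ : ℝ → E} (hc : Continuous c)
    (hγ : Continuous γ) {a b B : ℝ} {w₀ : E}
    (hf : ∀ᶠ w in 𝓝 w₀, ∀ θ, DifferentiableAt ℂ f (w + γ θ) ∧ ‖fderiv ℂ f (w + γ θ)‖ ≤ B) :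
    DifferentiableAt ℂ (fun w ↦ ∫ θ in a..b, c θ • f (w + γ θ)) w₀ := by
  borelize E
  have hcont : ∀ᶠ w in 𝓝 w₀, Continuous fun θ ↦ c θ • f (w + γ θ) :=
    hf.mono fun w hw ↦ hc.smul <| continuous_iff_continuousAt.2 fun θ ↦
      (hw θ).1.continuousAt.comp (f := fun θ ↦ w + γ θ) (continuous_const.add hγ).continuousAt
  refine (intervalIntegral.hasFDerivAt_integral_of_dominated_of_fderiv_le
    (F' := fun w θ ↦ c θ • fderiv ℂ f (w + γ θ)) (bound := fun θ ↦ ‖c θ‖ * B) hf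
    (hcont.mono fun w hw ↦ hw.aestronglyMeasurable)
    (hcont.self_of_nhds.intervalIntegrable a b) ?_ ?_ ?_ ?_).differentiableAt
  · exact (hc.aestronglyMeasurable.smul
      ((measurable_fderiv ℂ f).comp (measurable_const.add hγ.measurable)).aestronglyMeasurable)
  · refine Eventually.of_forall fun θ _ w hw ↦ ?_
    rw [norm_smul]
    exact mul_le_mul_of_nonneg_left (hw θ).2 (norm_nonneg _)
  · exact (hc.norm.mul continuous_const).intervalIntegrable a b
  · refine Eventually.of_forall fun θ _ w hw ↦ ?_
    exact ((hw θ).1.hasFDerivAt.comp w ((hasFDerivAt_id w).add_const (γ θ))).const_smul (c θ)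

open Real in
theorem differentiableAt_fderiv_apply [FiniteDimensional ℂ E] [CompleteSpace F]
    [SecondCountableTopology F] {f : E → F} {w₀ : E} (hf : ∀ᶠ w in 𝓝 w₀, DifferentiableAt ℂ f w)
    (v : E) : DifferentiableAt ℂ (fun w ↦ fderiv ℂ f w v) w₀ := by
  obtain ⟨B, hB⟩ := exists_eventually_norm_fderiv_le hf
  obtain ⟨ε, hε, hball⟩ := Metric.eventually_nhds_iff_ball.1 (hf.and hB)
  set ρ := ε / (2 * (‖v‖ + 1))
  have hρ : 0 < ρ := by positivity
  have hρv : ρ * ‖v‖ < ε / 2 := by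
    rw [div_mul_eq_mul_div, div_lt_div_iff₀ (by positivity) two_pos]
    nlinarith [norm_nonneg v]
  have hmem : ∀ w ∈ ball w₀ (ε / 2), ∀ z ∈ closedBall (0 : ℂ) ρ, w + z • v ∈ ball w₀ ε := by
    intro w hw z hz
    rw [mem_ball, dist_eq_norm] at hw ⊢
    rw [mem_closedBall, dist_zero_right] at hz
    calc ‖w + z • v - w₀‖ ≤ ‖w - w₀‖ + ‖z‖ * ‖v‖ := by
          rw [add_sub_right_comm, ← norm_smul]; exact norm_add_le _ _
      _ < ε / 2 + ε / 2 := add_lt_add_of_lt_of_le hw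
          ((mul_le_mul_of_nonneg_right hz (norm_nonneg v)).trans hρv.le)
      _ = ε := add_halves ε
  have hcircle : ∀ θ, circleMap 0 ρ θ ∈ closedBall (0 : ℂ) ρ :=
    fun θ ↦ sphere_subset_closedBall (circleMap_mem_sphere 0 hρ.le θ)
  have hint : DifferentiableAt ℂ (fun w ↦ (2 * π * I)⁻¹ •
      ∮ z in C(0, ρ), (1 / z ^ 2) • f (w + z • v)) w₀ := by
    simp only [circleIntegral, smul_smul]
    refine (differentiableAt_intervalIntegral_smul_comp_add (B := B) ?_
      ((continuous_circleMap 0 ρ).smul continuous_const) ?_).const_smul _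
    · exact ((contDiff_circleMap 0 ρ (n := 1)).continuous_deriv le_rfl).mul
        (continuous_const.div ((continuous_circleMap 0 ρ).pow 2)
          fun θ ↦ pow_ne_zero 2 (circleMap_ne_center hρ.ne'))
    · filter_upwards [ball_mem_nhds w₀ (half_pos hε)] with w hw θ
      exact hball _ (hmem w hw _ (hcircle θ))
  refine hint.congr_of_eventuallyEq ?_
  filter_upwards [ball_mem_nhds w₀ (half_pos hε)] with w hw
  exact fderiv_apply_eq_circleIntegral hρ fun z hz ↦ (hball _ (hmem w hw z hz)).1

theorem norm_le_div_of_forall_norm_smul_le {g : ℂ → F} {R M : ℝ}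
    (hg : DifferentiableOn ℂ g (ball 0 R)) (hM : ∀ t ∈ ball (0 : ℂ) R, ‖t • g t‖ ≤ M) {t : ℂ}
    (ht : t ∈ ball 0 R) :
    ‖g t‖ ≤ M / R := by
  -- written with `t - 0` to match `dslope_sub_smul_of_ne`
  set η : ℂ → F := fun t ↦ (t - 0) • g t
  have hη : DifferentiableOn ℂ η (ball 0 R) :=
    ((differentiableOn_id.sub_const 0).smul hg)
  have hmaps : MapsTo η (ball 0 R) (closedBall (η 0) M) := fun u hu ↦ by
    simpa [η] using hM u hu
  have hslope : dslope η 0 t = g t := by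
    rcases eq_or_ne t 0 with rfl | ht0
    · rw [dslope_same]
      have hη0 : HasDerivAt η ((0 - 0 : ℂ) • deriv g 0 + (1 : ℂ) • g 0) 0 :=
        ((hasDerivAt_id' 0).sub_const 0).smul
          (hg.differentiableAt (isOpen_ball.mem_nhds ht)).hasDerivAt
      simp [hη0.deriv]
    · exact dslope_sub_smul_of_ne g ht0
  rw [← hslope]
  exact norm_dslope_le_div_of_mapsTo_ball hη hmaps ht

theorem norm_sub_le_div_of_forall_norm_smul_deriv_le [CompleteSpace F] {φ : ℂ → F} {R M : ℝ}
    (hR : 1 < R) (hφ : DifferentiableOn ℂ φ (ball 0 R))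
    (hM : ∀ t ∈ ball (0 : ℂ) R, ‖t • deriv φ t‖ ≤ M) :
    ‖φ 1 - φ 0‖ ≤ M / R := by
  have hderiv : DifferentiableOn ℂ (deriv φ) (ball 0 R) :=
    (hφ.analyticOnNhd isOpen_ball).deriv.differentiableOn
  have h0 : (0 : ℂ) ∈ ball (0 : ℂ) R := mem_ball_self (by linarith)
  have h1 : (1 : ℂ) ∈ ball (0 : ℂ) R := by simpa using hR
  simpa using (convex_ball (0 : ℂ) R).norm_image_sub_le_of_norm_deriv_le
    (fun t ht ↦ hφ.differentiableAt (isOpen_ball.mem_nhds ht))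
    (fun t ht ↦ norm_le_div_of_forall_norm_smul_le hderiv hM ht) h0 h1

end Holomorphic

theorem polydisk_eq_ball (n : ℕ) : polydisk n = ball (0 : Fin n → ℂ) 1 := by
  ext z
  simp only [polydisk, mem_ofPred_eq, mem_ball_zero_iff, pi_norm_lt_iff one_pos]

theorem ContinuousLinearMap.apply_eq_sum_mul_apply_single {ι : Type*} [Fintype ι] [DecidableEq ι]
    (L : (ι → ℂ) →L[ℂ] ℂ) (z : ι → ℂ) : L z = ∑ j, z j * L (Pi.single j 1) := by
  conv_lhs => rw [← Finset.univ_sum_single z]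
  rw [map_sum]
  refine Finset.sum_congr rfl fun j _ ↦ ?_
  rw [← smul_eq_mul, ← L.map_smul, ← Pi.single_smul, smul_eq_mul, mul_one]

theorem norm_sum_mul_le_sum_sum_sum {ι : Type*} [Fintype ι] (x : ι → ℂ) (A : ι → ι → ℂ) (k : ι) :
    ‖∑ j, x j * A j k‖ ≤ ∑ l, ∑ j, ∑ k', ‖x l * A j k'‖ := by
  refine (norm_sum_le _ _).trans (Finset.sum_le_sum fun j _ ↦ ?_)
  calc ‖x j * A j k‖ ≤ ∑ k', ‖x j * A j k'‖ :=
        Finset.single_le_sum (f := fun k' ↦ ‖x j * A j k'‖) (fun _ _ ↦ norm_nonneg _)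
          (Finset.mem_univ k)
    _ ≤ ∑ j', ∑ k', ‖x j * A j' k'‖ :=
        Finset.single_le_sum (f := fun j' ↦ ∑ k', ‖x j * A j' k'‖)
          (fun _ _ ↦ Finset.sum_nonneg fun _ _ ↦ norm_nonneg _) (Finset.mem_univ j)

theorem hasDerivAt_pder_smul {n : ℕ} {f : (Fin n → ℂ) → ℂ}
    (hf : ∀ w ∈ polydisk n, DifferentiableAt ℂ f w) {z : Fin n → ℂ} {s : ℂ}
    (hs : s • z ∈ polydisk n) (k : Fin n) :
    HasDerivAt (fun s : ℂ ↦ pder f (s • z) k) (∑ j, z j * pder2 f (s • z) j k) s := by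
  have hopen : IsOpen (polydisk n) := polydisk_eq_ball n ▸ isOpen_ball
  have hpder : DifferentiableAt ℂ (fun w ↦ pder f w k) (s • z) :=
    differentiableAt_fderiv_apply (Filter.eventually_of_mem (hopen.mem_nhds hs) hf) _
  have hray : HasDerivAt (fun s : ℂ ↦ s • z) z s := by
    simpa using (hasDerivAt_id s).smul_const z
  have hchain := hpder.hasFDerivAt.comp_hasDerivAt s hray
  rwa [ContinuousLinearMap.apply_eq_sum_mul_apply_single] at hchain

theorem stmt_7_general {n : ℕ} (M : ℝ) (hM1 : M ≤ 1)
    (f : (Fin n → ℂ) → ℂ) (hf : memB n M f) :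
    ∀ z ∈ polydisk n, ∀ k : Fin n, pder f z k ≠ 0 := by
  obtain ⟨hdiff, -, hpder0, hbound⟩ := hf
  intro z hz k
  rcases eq_or_ne z 0 with rfl | hz0
  · simp [hpder0 k]
  have hr : 0 < ‖z‖ := norm_pos_iff.2 hz0
  have hr1 : ‖z‖ < 1 := by rwa [polydisk_eq_ball, mem_ball_zero_iff] at hz
  have hray : ∀ s ∈ ball (0 : ℂ) ‖z‖⁻¹, s • z ∈ polydisk n := fun s hs ↦ by
    rw [polydisk_eq_ball, mem_ball_zero_iff, norm_smul]
    calc ‖s‖ * ‖z‖ < ‖z‖⁻¹ * ‖z‖ := mul_lt_mul_of_pos_right (mem_ball_zero_iff.1 hs) hr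
      _ = 1 := inv_mul_cancel₀ hr.ne'
  have hderiv := fun s hs ↦ hasDerivAt_pder_smul hdiff (hray s hs) k
  have hbound_ray : ∀ s ∈ ball (0 : ℂ) ‖z‖⁻¹, ‖s • deriv (fun s : ℂ ↦ pder f (s • z) k) s‖ ≤ M :=
    fun s hs ↦ by
      rw [(hderiv s hs).deriv, Finset.smul_sum]
      simpa [mul_assoc] using norm_sum_mul_le_sum_sum_sum (s • z) (pder2 f (s • z)) k
        |>.trans (hbound _ (hray s hs))
  have hclose : ‖pder f z k - 1‖ ≤ M * ‖z‖ := by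
    simpa [hpder0 k, div_inv_eq_mul] using norm_sub_le_div_of_forall_norm_smul_deriv_le
      ((one_lt_inv₀ hr).2 hr1)
      (fun s hs ↦ (hderiv s hs).differentiableAt.differentiableWithinAt) hbound_ray
  intro h
  rw [h, zero_sub, norm_neg, norm_one] at hclose
  nlinarith

/-- for `0 < M ≤ 1`, the partial derivatives of `f ∈ 𝓑_n(M)` never vanish
on the unit polydisk (Theorem 2.4). -/
theorem stmt_7 {n : ℕ} (M : ℝ) (hM0 : 0 < M) (hM1 : M ≤ 1)
    (f : (Fin n → ℂ) → ℂ) (hf : memB n M f) :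
    ∀ z ∈ polydisk n, ∀ k : Fin n, pder f z k ≠ 0 :=
  stmt_7_general M hM1 f hf
end
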